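/- arXiv:2405.18262 — 6 statements merged into one kernel-verified Lean document; each statement's English description precedes it below -/
import Mathlib

section
/- For every c in (0,1] and every set Γ of bi-Gödel formulas and formula χ: Γ entails χ with respect to the filter (c',1] for some/any 0 < c' < 1 (i.e., whenever inf of values of Γ under a valuation lies in (c',1], the value of χ does too) if and only if Γ entails χ with respect to the order (i.e., inf{v(φ) : φ ∈ Γ} ≤ v(χ) for every valuation v). In particular, for any 0 < c < 1, order-entailment in bi-Gödel logic coincides with entailment induced by the filter (c,1]. -/
noncomputable def gimp (a b : ℝ) : ℝ := if a ≤ b then 1 else b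
noncomputable def gcoimp (a b : ℝ) : ℝ := if a ≤ b then 0 else a
noncomputable def gneg (a : ℝ) : ℝ := if a = 0 then 1 else 0
noncomputable def gdelta (a : ℝ) : ℝ := if a = 1 then 1 else 0

/-- Bi-Gödel formulas. -/
inductive BForm : Type
  | var : ℕ → BForm
  | bot : BForm
  | top : BForm
  | and : BForm → BForm → BForm
  | or : BForm → BForm → BForm
  | imp : BForm → BForm → BForm
  | coimp : BForm → BForm → BForm
  | wneg : BForm → BForm
  | delta : BForm → BForm

/-- Evaluation of bi-Gödel formulas in `[0,1]`. -/
noncomputable def beval (v : ℕ → ℝ) : BForm → ℝ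
  | .var n => v n
  | .bot => 0
  | .top => 1
  | .and φ χ => min (beval v φ) (beval v χ)
  | .or φ χ => max (beval v φ) (beval v χ)
  | .imp φ χ => gimp (beval v φ) (beval v χ)
  | .coimp φ χ => gcoimp (beval v φ) (beval v χ)
  | .wneg φ => gneg (beval v φ)
  | .delta φ => gdelta (beval v φ)

def valOK (v : ℕ → ℝ) : Prop := ∀ n, v n ∈ Set.Icc (0:ℝ) 1

/-- The infimum of the values of a set of premises (equal to `1` for the empty set). -/
noncomputable def infVal (v : ℕ → ℝ) (Γ : Set BForm) : ℝ :=
  sInf (insert 1 (beval v '' Γ))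

/-- Entailment induced by a set `D` of designated values. -/
def entD (D : Set ℝ) (Γ : Set BForm) (χ : BForm) : Prop :=
  ∀ v : ℕ → ℝ, valOK v → infVal v Γ ∈ D → beval v χ ∈ D

/-- Order-entailment. -/
def entLe (Γ : Set BForm) (χ : BForm) : Prop :=
  ∀ v : ℕ → ℝ, valOK v → infVal v Γ ≤ beval v χ

lemma beval_mem (v : ℕ → ℝ) (hv : valOK v) (φ : BForm) : beval v φ ∈ Set.Icc (0:ℝ) 1 := by
  induction φ with
  | var n => exact hv n
  | bot => simp [beval]
  | top => simp [beval]
  | and φ ψ ih1 ih2 =>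
      exact ⟨le_min ih1.1 ih2.1, min_le_of_left_le ih1.2⟩
  | or φ ψ ih1 ih2 =>
      exact ⟨le_max_of_le_left ih1.1, max_le ih1.2 ih2.2⟩
  | imp φ ψ ih1 ih2 =>
      rw [beval, gimp]; split
      · exact ⟨zero_le_one, le_refl 1⟩
      · exact ih2
  | coimp φ ψ ih1 ih2 =>
      rw [beval, gcoimp]; split
      · exact ⟨le_refl 0, zero_le_one⟩
      · exact ih1
  | wneg φ ih =>
      rw [beval, gneg]; split
      · exact ⟨zero_le_one, le_refl 1⟩
      · exact ⟨le_refl 0, zero_le_one⟩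
  | delta φ ih =>
      rw [beval, gdelta]; split
      · exact ⟨zero_le_one, le_refl 1⟩
      · exact ⟨le_refl 0, zero_le_one⟩

lemma beval_comp (f : ℝ → ℝ) (hf : StrictMono f) (hf0 : f 0 = 0) (hf1 : f 1 = 1)
    (v : ℕ → ℝ) (φ : BForm) : beval (f ∘ v) φ = f (beval v φ) := by
  induction φ with
  | var n => rfl
  | bot => simp [beval, hf0]
  | top => simp [beval, hf1]
  | and φ ψ ih1 ih2 => rw [beval, beval, ih1, ih2, hf.monotone.map_min]
  | or φ ψ ih1 ih2 => rw [beval, beval, ih1, ih2, hf.monotone.map_max]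
  | imp φ ψ ih1 ih2 =>
      rw [beval, beval, ih1, ih2]
      unfold gimp
      by_cases h : beval v φ ≤ beval v ψ
      · rw [if_pos h, if_pos (hf.monotone h), hf1]
      · rw [if_neg h, if_neg (fun hh => h (hf.le_iff_le.mp hh))]
  | coimp φ ψ ih1 ih2 =>
      rw [beval, beval, ih1, ih2]
      unfold gcoimp
      by_cases h : beval v φ ≤ beval v ψ
      · rw [if_pos h, if_pos (hf.monotone h), hf0]
      · rw [if_neg h, if_neg (fun hh => h (hf.le_iff_le.mp hh))]
  | wneg φ ih =>
      rw [beval, beval, ih]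
      unfold gneg
      by_cases h : beval v φ = 0
      · rw [if_pos h, if_pos (by rw [h, hf0]), hf1]
      · rw [if_neg h, if_neg (fun hh => h (hf.injective (by rw [hh, hf0]))), hf0]
  | delta φ ih =>
      rw [beval, beval, ih]
      unfold gdelta
      by_cases h : beval v φ = 1
      · rw [if_pos h, if_pos (by rw [h, hf1]), hf1]
      · rw [if_neg h, if_neg (fun hh => h (hf.injective (by rw [hh, hf1]))), hf0]

noncomputable def hmap (c t x : ℝ) : ℝ := if x ≤ t then c/t * x else c + (1-c)/(1-t) * (x - t)

lemma hmap_strictMono {c t : ℝ} (hc0 : 0 < c) (hc1 : c < 1) (ht0 : 0 < t) (ht1 : t < 1) :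
    StrictMono (hmap c t) := by
  intro x y hxy
  unfold hmap
  have hct : 0 < c / t := div_pos hc0 ht0
  have hs : 0 < (1-c)/(1-t) := div_pos (by linarith) (by linarith)
  by_cases hx : x ≤ t
  · by_cases hy : y ≤ t
    · rw [if_pos hx, if_pos hy]; exact mul_lt_mul_of_pos_left hxy hct
    · rw [if_pos hx, if_neg hy]
      push_neg at hy
      have h1 : c/t * x ≤ c := by
        have : c/t*x ≤ c/t*t := mul_le_mul_of_nonneg_left hx hct.le
        have h2 : c/t*t = c := by field_simp
        linarith
      have : 0 < (1-c)/(1-t) * (y - t) := mul_pos hs (by linarith)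
      linarith
  · push_neg at hx
    rw [if_neg (not_le.mpr hx), if_neg (not_le.mpr (hx.trans hxy))]
    have := mul_lt_mul_of_pos_left (show x - t < y - t by linarith) hs
    linarith

lemma hmap_zero {c t : ℝ} (ht0 : 0 < t) : hmap c t 0 = 0 := by
  rw [hmap, if_pos ht0.le, mul_zero]

lemma hmap_one {c t : ℝ} (ht1 : t < 1) : hmap c t 1 = 1 := by
  rw [hmap, if_neg (not_le.mpr ht1)]
  have h : (1-c)/(1-t) * (1 - t) = 1 - c := div_mul_cancel₀ _ (by linarith)
  linarith


/-- For any `0 < c < 1`, the entailment induced by the filter `(c,1]` coincides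
with the order-entailment in bi-Gödel logic. -/
theorem filter_entailment_eq_order_entailment :
    ∀ c : ℝ, 0 < c → c < 1 →
      ∀ (Γ : Set BForm) (χ : BForm), entD (Set.Ioc c 1) Γ χ ↔ entLe Γ χ := by
  intro c hc0 hc1 Γ χ
  constructor
  · intro hD v hv
    by_contra hlt
    push_neg at hlt
    set b := beval v χ with hbdef
    set m := infVal v Γ with hmdef
    have hbdd : BddBelow (insert 1 (beval v '' Γ)) := by
      refine ⟨0, ?_⟩
      intro x hx
      rcases Set.mem_insert_iff.mp hx with rfl | ⟨φ, hφ, rfl⟩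
      · exact zero_le_one
      · exact (beval_mem v hv φ).1
    have hb01 := beval_mem v hv χ
    have hm1 : m ≤ 1 := csInf_le hbdd (Set.mem_insert _ _)
    set t := (b + m)/2 with htdef
    have hbt : b < t := by simp only [htdef]; linarith
    have htm : t < m := by simp only [htdef]; linarith
    have ht0 : 0 < t := lt_of_le_of_lt hb01.1 hbt
    have ht1 : t < 1 := lt_of_lt_of_le htm hm1
    have hsm := hmap_strictMono hc0 hc1 ht0 ht1
    have h0 := hmap_zero (c := c) ht0
    have h1 := hmap_one (c := c) ht1
    have hvOK : valOK (hmap c t ∘ v) := fun n =>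
      ⟨h0 ▸ hsm.monotone (hv n).1, h1 ▸ hsm.monotone (hv n).2⟩
    have key : ∀ x ∈ insert 1 (beval (hmap c t ∘ v) '' Γ), hmap c t m ≤ x := by
      intro x hx
      rcases Set.mem_insert_iff.mp hx with rfl | ⟨φ, hφ, rfl⟩
      · exact h1 ▸ hsm.monotone hm1
      · rw [beval_comp _ hsm h0 h1]
        exact hsm.monotone (csInf_le hbdd (Set.mem_insert_iff.mpr (Or.inr ⟨φ, hφ, rfl⟩)))
    have hmc : c < hmap c t m := by
      rw [hmap, if_neg (not_le.mpr htm)]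
      have : 0 < (1-c)/(1-t) * (m - t) :=
        mul_pos (div_pos (by linarith) (by linarith)) (by linarith)
      linarith
    have hin : infVal (hmap c t ∘ v) Γ ∈ Set.Ioc c 1 := by
      constructor
      · exact lt_of_lt_of_le hmc (le_csInf ⟨1, Set.mem_insert _ _⟩ key)
      · refine csInf_le ⟨0, ?_⟩ (Set.mem_insert _ _)
        intro x hx
        rcases Set.mem_insert_iff.mp hx with rfl | ⟨φ, hφ, rfl⟩
        · exact zero_le_one
        · exact (beval_mem _ hvOK φ).1
    have hout := (hD _ hvOK hin).1
    rw [beval_comp _ hsm h0 h1] at hout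
    have hlow : hmap c t b < c := by
      rw [hmap, if_pos hbt.le]
      have h2 : c/t * b < c/t * t := mul_lt_mul_of_pos_left hbt (div_pos hc0 ht0)
      have h3 : c/t * t = c := by field_simp
      linarith
    linarith
  · intro hle v hv hmem
    exact ⟨lt_of_lt_of_le hmem.1 (hle v hv), (beval_mem v hv χ).2⟩
end

section
/- In G_inv, let D be any filter on [0,1]. Then p ∧ ∼ᵢp ⊨^D q (i.e., for every valuation v, min(v(p), 1−v(p)) ∈ D implies v(q) ∈ D) if and only if 1/2 ∉ D. -/
/-- Formulas of Gödel logic with involutive negation. -/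
inductive IForm : Type
  | var : ℕ → IForm
  | bot : IForm
  | top : IForm
  | and : IForm → IForm → IForm
  | or : IForm → IForm → IForm
  | imp : IForm → IForm → IForm
  | coimp : IForm → IForm → IForm
  | wneg : IForm → IForm
  | delta : IForm → IForm
  | inv : IForm → IForm

/-- Evaluation of `G_inv` formulas in `[0,1]`. -/
noncomputable def ieval (v : ℕ → ℝ) : IForm → ℝ
  | .var n => v n
  | .bot => 0
  | .top => 1
  | .and φ χ => min (ieval v φ) (ieval v χ)
  | .or φ χ => max (ieval v φ) (ieval v χ)
  | .imp φ χ => gimp (ieval v φ) (ieval v χ)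
  | .coimp φ χ => gcoimp (ieval v φ) (ieval v χ)
  | .wneg φ => gneg (ieval v φ)
  | .delta φ => gdelta (ieval v φ)
  | .inv φ => 1 - ieval v φ

/-- A (lattice) filter on `[0,1]`. -/
structure GFilter (D : Set ℝ) : Prop where
  subset : D ⊆ Set.Icc (0:ℝ) 1
  nonempty : D.Nonempty
  proper : D ≠ Set.Icc (0:ℝ) 1
  min_mem : ∀ a ∈ D, ∀ b ∈ D, min a b ∈ D
  upward : ∀ a ∈ D, ∀ b ∈ Set.Icc (0:ℝ) 1, a ≤ b → b ∈ D

/-- In `G_inv`, `p ∧ ∼ᵢp ⊨^D q` iff `1/2 ∉ D`, for any filter `D` on `[0,1]`. -/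
theorem paraconsistency_iff_half_not_in_filter :
    ∀ D : Set ℝ, GFilter D →
      ((∀ v : ℕ → ℝ, valOK v →
          ieval v (.and (.var 0) (.inv (.var 0))) ∈ D → ieval v (.var 1) ∈ D)
        ↔ (1/2 : ℝ) ∉ D) := by
  intro D hD
  constructor
  · intro h hhalf
    have hv : valOK (fun n => if n = 0 then (1/2 : ℝ) else 0) := by
      intro n; dsimp only; split <;> norm_num
    have := h _ hv
    simp only [ieval, valOK] at this
    norm_num at this
    have h0 : (0:ℝ) ∈ D := this hhalf
    apply hD.proper
    apply Set.Subset.antisymm hD.subset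
    intro x hx
    exact hD.upward 0 h0 x hx hx.1
  · intro hhalf v hv hmem
    exfalso
    apply hhalf
    have hle : min (v 0) (1 - v 0) ≤ 1/2 := by
      rcases le_total (v 0) (1/2) with h | h
      · exact le_trans (min_le_left _ _) h
      · exact le_trans (min_le_right _ _) (by linarith)
    exact hD.upward _ hmem (1/2) (by norm_num) (by simpa [ieval] using hle)
end

section
/- In G² (two valuations v₁, v₂ : Prop → [0,1] with the G²(→,⤙) semantics), define the conflated valuation v* by v*₁(p) = 1 − v₂(p) and v*₂(p) = 1 − v₁(p). Then for every formula φ: v₁(φ) = x and v₂(φ) = y iff v*₁(φ) = 1−y and v*₂(φ) = 1−x. -/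
/-- Formulas of `G²(→,⤙)`. -/
inductive GForm : Type
  | var : ℕ → GForm
  | snot : GForm → GForm      -- strong (De Morgan) negation ¬
  | wnot : GForm → GForm      -- Gödel negation ∼
  | delta : GForm → GForm     -- Baaz delta Δ
  | and : GForm → GForm → GForm
  | or : GForm → GForm → GForm
  | imp : GForm → GForm → GForm
  | coimp : GForm → GForm → GForm

/-- Evaluation of `G²(→,⤙)` formulas: the pair (support of truth, support of falsity). -/
noncomputable def geval (v1 v2 : ℕ → ℝ) : GForm → ℝ × ℝ
  | .var n => (v1 n, v2 n)
  | .snot φ => ((geval v1 v2 φ).2, (geval v1 v2 φ).1)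
  | .wnot φ => (gneg (geval v1 v2 φ).1, gcoimp 1 (geval v1 v2 φ).2)
  | .delta φ => (gdelta (geval v1 v2 φ).1, gneg (gneg (geval v1 v2 φ).2))
  | .and φ χ => (min (geval v1 v2 φ).1 (geval v1 v2 χ).1,
                 max (geval v1 v2 φ).2 (geval v1 v2 χ).2)
  | .or φ χ => (max (geval v1 v2 φ).1 (geval v1 v2 χ).1,
                min (geval v1 v2 φ).2 (geval v1 v2 χ).2)
  | .imp φ χ => (gimp (geval v1 v2 φ).1 (geval v1 v2 χ).1,
                 gcoimp (geval v1 v2 χ).2 (geval v1 v2 φ).2)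
  | .coimp φ χ => (gcoimp (geval v1 v2 φ).1 (geval v1 v2 χ).1,
                   gimp (geval v1 v2 χ).2 (geval v1 v2 φ).2)

lemma geval_bounds (v1 v2 : ℕ → ℝ) (hv1 : valOK v1) (hv2 : valOK v2) :
    ∀ φ : GForm, (geval v1 v2 φ).1 ∈ Set.Icc (0:ℝ) 1 ∧
      (geval v1 v2 φ).2 ∈ Set.Icc (0:ℝ) 1 := by
  intro φ
  induction φ with
  | var n => exact ⟨hv1 n, hv2 n⟩
  | snot φ ih => exact ⟨ih.2, ih.1⟩
  | wnot φ ih =>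
    simp only [geval, gneg, gcoimp]
    constructor <;> split_ifs <;> simp [Set.mem_Icc]
  | delta φ ih =>
    simp only [geval, gneg, gdelta]
    constructor <;> split_ifs <;> simp [Set.mem_Icc]
  | and φ χ ihφ ihχ =>
    obtain ⟨⟨a1,a2⟩,⟨a3,a4⟩⟩ := ihφ
    obtain ⟨⟨b1,b2⟩,⟨b3,b4⟩⟩ := ihχ
    simp only [geval, Set.mem_Icc]
    constructor <;> constructor <;>
      simp [le_min_iff, min_le_iff, le_max_iff, max_le_iff, *]
  | or φ χ ihφ ihχ =>
    obtain ⟨⟨a1,a2⟩,⟨a3,a4⟩⟩ := ihφ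
    obtain ⟨⟨b1,b2⟩,⟨b3,b4⟩⟩ := ihχ
    simp only [geval, Set.mem_Icc]
    constructor <;> constructor <;>
      simp [le_min_iff, min_le_iff, le_max_iff, max_le_iff, *]
  | imp φ χ ihφ ihχ =>
    simp only [geval, gimp, gcoimp]
    constructor <;> split_ifs <;>
      simp_all [Set.mem_Icc]
  | coimp φ χ ihφ ihχ =>
    simp only [geval, gimp, gcoimp]
    constructor <;> split_ifs <;>
      simp_all [Set.mem_Icc]

lemma geval_conflation (v1 v2 : ℕ → ℝ) (hv1 : valOK v1) (hv2 : valOK v2) :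
    ∀ φ : GForm, geval (fun n => 1 - v2 n) (fun n => 1 - v1 n) φ =
      (1 - (geval v1 v2 φ).2, 1 - (geval v1 v2 φ).1) := by
  intro φ
  induction φ with
  | var n => rfl
  | snot φ ih => simp [geval, ih]
  | wnot φ ih =>
    obtain ⟨⟨hx0, hx1⟩, ⟨hy0, hy1⟩⟩ := geval_bounds v1 v2 hv1 hv2 φ
    simp only [geval, ih, gneg, gcoimp, Prod.mk.injEq]
    constructor
    · by_cases h : (geval v1 v2 φ).2 = 1
      · rw [if_pos (by rw [h]; ring), if_pos (by rw [h])]; norm_num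
      · rw [if_neg (fun hc => h (by linarith)),
            if_neg (fun hc => h (le_antisymm hy1 hc))]; norm_num
    · by_cases h : (geval v1 v2 φ).1 = 0
      · rw [if_pos (by rw [h]; norm_num), if_pos h]; norm_num
      · have : 0 < (geval v1 v2 φ).1 := lt_of_le_of_ne hx0 (Ne.symm h)
        rw [if_neg (by intro hc; linarith), if_neg h]; norm_num
  | delta φ ih =>
    obtain ⟨⟨hx0, hx1⟩, ⟨hy0, hy1⟩⟩ := geval_bounds v1 v2 hv1 hv2 φ
    simp only [geval, ih, gneg, gdelta, Prod.mk.injEq]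
    constructor
    · by_cases h : (geval v1 v2 φ).2 = 0
      · simp [h]
      · rw [if_neg (fun hc => h (by linarith))]; simp [h]
    · by_cases h : (geval v1 v2 φ).1 = 1
      · simp [h]
      · rw [if_neg (show ¬(1 - (geval v1 v2 φ).1 = 0) from fun hc => h (by linarith))]
        simp [h]
  | and φ χ ihφ ihχ =>
    simp only [geval, ihφ, ihχ, Prod.mk.injEq]
    constructor <;> rcases le_total (geval v1 v2 φ).1 (geval v1 v2 χ).1 with h | h <;>
      rcases le_total (geval v1 v2 φ).2 (geval v1 v2 χ).2 with h2 | h2 <;>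
      simp [min_def, max_def] <;> split_ifs <;> linarith
  | or φ χ ihφ ihχ =>
    simp only [geval, ihφ, ihχ, Prod.mk.injEq]
    constructor <;> rcases le_total (geval v1 v2 φ).1 (geval v1 v2 χ).1 with h | h <;>
      rcases le_total (geval v1 v2 φ).2 (geval v1 v2 χ).2 with h2 | h2 <;>
      simp [min_def, max_def] <;> split_ifs <;> linarith
  | imp φ χ ihφ ihχ =>
    simp only [geval, ihφ, ihχ, gimp, gcoimp, Prod.mk.injEq]
    constructor <;> split_ifs <;> simp_all <;> linarith
  | coimp φ χ ihφ ihχ =>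
    simp only [geval, ihφ, ihχ, gimp, gcoimp, Prod.mk.injEq]
    constructor <;> split_ifs <;> simp_all <;> linarith

/-- Conflation: `v*(φ) = ⟨1−y,1−x⟩` whenever `v(φ) = ⟨x,y⟩`. -/
theorem conflation_preserves_values (v1 v2 : ℕ → ℝ)
    (hv1 : valOK v1) (hv2 : valOK v2) :
    ∀ (φ : GForm) (x y : ℝ),
      (geval v1 v2 φ = (x, y) ↔
        geval (fun n => 1 - v2 n) (fun n => 1 - v1 n) φ = (1 - y, 1 - x)) := by
  intro φ x y
  rw [geval_conflation v1 v2 hv1 hv2 φ]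
  constructor
  · rintro h; rw [h]
  · intro h
    have h1 : 1 - (geval v1 v2 φ).2 = 1 - y := congrArg Prod.fst h
    have h2 : 1 - (geval v1 v2 φ).1 = 1 - x := congrArg Prod.snd h
    have : (geval v1 v2 φ).1 = x := by linarith
    have : (geval v1 v2 φ).2 = y := by linarith
    exact Prod.ext ‹_› ‹_›
end

section
/- In G²(→,⤙): for every pair of valuations v = ⟨v₁, v₂⟩ and every variable q, v₁(q ∨ ∼q) > 0 and v₂(q ∨ ∼q) < 1. Moreover, for any x ∈ (0,1] and y ∈ [0,1), there exists a valuation with v₁(q∨∼q) = x and a valuation with v₂(q∨∼q) = y. -/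
/-- In `G²(→,⤙)`: `v₁(q∨∼q) > 0` and `v₂(q∨∼q) < 1` always, and both coordinates
realise every value in `(0,1]` and `[0,1)` respectively. -/
theorem excluded_middle_values :
    (∀ v1 v2 : ℕ → ℝ, valOK v1 → valOK v2 →
        0 < (geval v1 v2 (.or (.var 0) (.wnot (.var 0)))).1 ∧
        (geval v1 v2 (.or (.var 0) (.wnot (.var 0)))).2 < 1) ∧
    (∀ x : ℝ, 0 < x → x ≤ 1 → ∃ v1 v2 : ℕ → ℝ, valOK v1 ∧ valOK v2 ∧
        (geval v1 v2 (.or (.var 0) (.wnot (.var 0)))).1 = x) ∧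
    (∀ y : ℝ, 0 ≤ y → y < 1 → ∃ v1 v2 : ℕ → ℝ, valOK v1 ∧ valOK v2 ∧
        (geval v1 v2 (.or (.var 0) (.wnot (.var 0)))).2 = y) := by
  refine ⟨?_, ?_, ?_⟩
  · intro v1 v2 h1 h2
    obtain ⟨h1a, h1b⟩ := h1 0
    obtain ⟨h2a, h2b⟩ := h2 0
    simp only [geval, gneg, gcoimp]
    constructor
    · rcases eq_or_lt_of_le h1a with h | h
      · simp [← h]
      · simp only [lt_max_iff]; left; exact h
    · by_cases h : (1:ℝ) ≤ v2 0
      · simp [h]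
      · simp only [h, if_false]
        have : v2 0 < 1 := lt_of_not_ge h
        simpa using this
  · intro x hx hx1
    refine ⟨fun _ => x, fun _ => 0, fun n => ⟨le_of_lt hx, hx1⟩, fun n => ⟨le_rfl, zero_le_one⟩, ?_⟩
    simp [geval, gneg, ne_of_gt hx, le_of_lt hx]
  · intro y hy hy1
    refine ⟨fun _ => 0, fun _ => y, fun n => ⟨le_rfl, zero_le_one⟩, fun n => ⟨hy, le_of_lt hy1⟩, ?_⟩
    simp [geval, gcoimp, not_le.mpr hy1, le_of_lt hy1]
end

section
/- Let D be a filter on [0,1]^⋈ (the product [0,1]×[0,1] ordered by ⟨x,y⟩ ≤ ⟨x',y'⟩ iff x ≤ x' and y ≥ y'). If there exist x' and y' with both ⟨x',y'⟩ ∈ D and ⟨y',x'⟩ ∈ D, then D contains a point of the form ⟨z,z⟩. Consequently, in G²(→,⤙), p, ¬p ⊨^D q fails iff D is paraconsistent (contains some ⟨z,z⟩). -/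
/-- The truth order on `[0,1]⋈`. -/
def tle (a b : ℝ × ℝ) : Prop := a.1 ≤ b.1 ∧ b.2 ≤ a.2

/-- Meet in the truth order. -/
noncomputable def tmeet (a b : ℝ × ℝ) : ℝ × ℝ := (min a.1 b.1, max a.2 b.2)

/-- The unit square, carrier of `[0,1]⋈`. -/
def unitSq : Set (ℝ × ℝ) := Set.Icc (0:ℝ) 1 ×ˢ Set.Icc (0:ℝ) 1

/-- A (lattice) filter on `[0,1]⋈` w.r.t. the truth order. -/
structure TFilter (D : Set (ℝ × ℝ)) : Prop where
  subset : D ⊆ unitSq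
  nonempty : D.Nonempty
  proper : D ≠ unitSq
  meet_mem : ∀ a ∈ D, ∀ b ∈ D, tmeet a b ∈ D
  upward : ∀ a ∈ D, ∀ b ∈ unitSq, tle a b → b ∈ D

/-- If a filter on `[0,1]⋈` contains `⟨x',y'⟩` and `⟨y',x'⟩`, it contains some
`⟨z,z⟩`; consequently `p, ¬p ⊨^D q` fails iff `D` is paraconsistent. -/
theorem paraconsistent_filter_characterisation (D : Set (ℝ × ℝ)) (hD : TFilter D) :
    (∀ x' y' : ℝ, (x', y') ∈ D → (y', x') ∈ D → ∃ z : ℝ, (z, z) ∈ D) ∧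
    (¬ (∀ v1 v2 : ℕ → ℝ, valOK v1 → valOK v2 →
          (min (geval v1 v2 (.var 0)).1 (geval v1 v2 (.snot (.var 0))).1,
           max (geval v1 v2 (.var 0)).2 (geval v1 v2 (.snot (.var 0))).2) ∈ D →
          geval v1 v2 (.var 1) ∈ D)
      ↔ ∃ z : ℝ, (z, z) ∈ D) := by

  have key : ∀ a b : ℝ, (min a b, max a b) ∈ D → (max a b, max a b) ∈ D := by
    intro a b hab
    have hsq := hD.subset hab
    simp only [unitSq, Set.mem_prod, Set.mem_Icc] at hsq
    refine hD.upward _ hab _ ?_ ⟨min_le_max, le_refl _⟩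
    constructor <;> simp only [Set.mem_Icc] <;>
      exact ⟨le_trans hsq.1.1 min_le_max, hsq.2.2⟩
  constructor
  · intro x' y' h1 h2
    have hm := hD.meet_mem _ h1 _ h2
    simp only [tmeet] at hm
    have : (min x' y', max y' x') = (min x' y', max x' y') := by rw [max_comm]
    rw [this] at hm
    exact ⟨max x' y', key x' y' hm⟩
  · constructor
    · intro hfail
      by_contra hz
      push_neg at hz
      apply hfail
      intro v1 v2 hv1 hv2 hprem
      simp only [geval] at hprem ⊢
      rw [max_comm] at hprem
      exact absurd (key _ _ hprem) (hz _)
    · rintro ⟨z, hz⟩ hall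
      have hzsq := hD.subset hz
      simp only [unitSq, Set.mem_prod, Set.mem_Icc] at hzsq
      have hss : D ⊂ unitSq := hD.subset.ssubset_of_ne hD.proper
      obtain ⟨w, hwU, hwD⟩ := Set.exists_of_ssubset hss
      simp only [unitSq, Set.mem_prod, Set.mem_Icc] at hwU
      set v1 : ℕ → ℝ := fun n => if n = 0 then z else w.1 with hv1def
      set v2 : ℕ → ℝ := fun n => if n = 0 then z else w.2 with hv2def
      have hv1 : valOK v1 := by
        intro n; simp only [hv1def]; split
        · exact ⟨hzsq.1.1, hzsq.1.2⟩
        · exact ⟨hwU.1.1, hwU.1.2⟩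
      have hv2 : valOK v2 := by
        intro n; simp only [hv2def]; split
        · exact ⟨hzsq.2.1, hzsq.2.2⟩
        · exact ⟨hwU.2.1, hwU.2.2⟩
      have := hall v1 v2 hv1 hv2 (by
        simp only [geval, hv1def, hv2def]
        simpa using hz)
      simp only [geval, hv1def, hv2def] at this
      exact hwD this
end

section
/- In G²(→,⤙), for every point-generated filter D = ⟨x,y⟩^↑ on [0,1]^⋈ (with ⟨x,y⟩ ≠ ⟨0,1⟩): a formula φ is G²-valid (v₁(φ)=1 and v₂(φ)=0 for all valuations) if and only if v(φ) ∈ D for every valuation v. In particular this holds for the single-premise-free case: if v(φ) ≥ ⟨x,y⟩ for all valuations v, then v(φ) = ⟨1,0⟩ for all v. -/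
/-- The principal upset (point-generated filter) of `⟨x,y⟩` in `[0,1]⋈`. -/
def upset (x y : ℝ) : Set (ℝ × ℝ) := {p : ℝ × ℝ | x ≤ p.1 ∧ p.2 ≤ y}

lemma geval_mem (v1 v2 : ℕ → ℝ) (h1 : valOK v1) (h2 : valOK v2) (φ : GForm) :
    (geval v1 v2 φ).1 ∈ Set.Icc (0:ℝ) 1 ∧ (geval v1 v2 φ).2 ∈ Set.Icc (0:ℝ) 1 := by
  induction φ with
  | var n => exact ⟨h1 n, h2 n⟩
  | snot φ ih => exact ⟨ih.2, ih.1⟩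
  | wnot φ ih =>
      constructor
      · simp only [geval, gneg]; split <;> norm_num
      · simp only [geval, gcoimp]; split <;> norm_num
  | delta φ ih =>
      constructor
      · simp only [geval, gdelta]; split <;> norm_num
      · simp only [geval, gneg]; split <;> (try split) <;> norm_num
  | and φ χ ihφ ihχ =>
      exact ⟨⟨le_min ihφ.1.1 ihχ.1.1, min_le_of_left_le ihφ.1.2⟩,
        ⟨le_max_of_le_left ihφ.2.1, max_le ihφ.2.2 ihχ.2.2⟩⟩
  | or φ χ ihφ ihχ =>
      exact ⟨⟨le_max_of_le_left ihφ.1.1, max_le ihφ.1.2 ihχ.1.2⟩,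
        ⟨le_min ihφ.2.1 ihχ.2.1, min_le_of_left_le ihφ.2.2⟩⟩
  | imp φ χ ihφ ihχ =>
      constructor
      · simp only [geval, gimp]; split
        · norm_num
        · exact ihχ.1
      · simp only [geval, gcoimp]; split
        · norm_num
        · exact ihχ.2
  | coimp φ χ ihφ ihχ =>
      constructor
      · simp only [geval, gcoimp]; split
        · norm_num
        · exact ihφ.1
      · simp only [geval, gimp]; split
        · norm_num
        · exact ihφ.2

lemma geval_comp (h : ℝ → ℝ) (hm : StrictMono h) (h0 : h 0 = 0) (h1 : h 1 = 1)
    (v1 v2 : ℕ → ℝ) (φ : GForm) :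
    geval (fun n => h (v1 n)) (fun n => h (v2 n)) φ =
      (h (geval v1 v2 φ).1, h (geval v1 v2 φ).2) := by
  have hinj := hm.injective
  have hgimp : ∀ a b, h (gimp a b) = gimp (h a) (h b) := by
    intro a b; unfold gimp
    by_cases hab : a ≤ b <;> simp [hab, hm.le_iff_le, h1]
  have hgcoimp : ∀ a b, h (gcoimp a b) = gcoimp (h a) (h b) := by
    intro a b; unfold gcoimp
    by_cases hab : a ≤ b <;> simp [hab, hm.le_iff_le, h0]
  have hgneg : ∀ a, h (gneg a) = gneg (h a) := by
    intro a; unfold gneg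
    by_cases ha : a = 0
    · simp [ha, h0, h1]
    · have : h a ≠ 0 := fun hh => ha (hinj (hh.trans h0.symm))
      simp [ha, this, h0]
  have hgdelta : ∀ a, h (gdelta a) = gdelta (h a) := by
    intro a; unfold gdelta
    by_cases ha : a = 1
    · simp [ha, h1]
    · have : h a ≠ 1 := fun hh => ha (hinj (hh.trans h1.symm))
      simp [ha, this, h0]
  have hcoimp1 : ∀ b, h (gcoimp 1 b) = gcoimp 1 (h b) := by
    intro b
    have := hgcoimp 1 b
    rwa [h1] at this
  induction φ with
  | var n => rfl
  | snot φ ih => simp [geval, ih]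
  | wnot φ ih => simp [geval, ih, hgneg, hcoimp1]
  | delta φ ih => simp [geval, ih, hgneg, hgdelta]
  | and φ χ ihφ ihχ => simp [geval, ihφ, ihχ, hm.monotone.map_min, hm.monotone.map_max]
  | or φ χ ihφ ihχ => simp [geval, ihφ, ihχ, hm.monotone.map_min, hm.monotone.map_max]
  | imp φ χ ihφ ihχ => simp [geval, ihφ, ihχ, hgimp, hgcoimp]
  | coimp φ χ ihφ ihχ => simp [geval, ihφ, ihχ, hgimp, hgcoimp]


lemma geval_conf (v1 v2 : ℕ → ℝ) (h1 : valOK v1) (h2 : valOK v2) (φ : GForm) :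
    geval (fun n => 1 - v2 n) (fun n => 1 - v1 n) φ =
      (1 - (geval v1 v2 φ).2, 1 - (geval v1 v2 φ).1) := by
  induction φ with
  | var n => rfl
  | snot φ ih => simp [geval, ih]
  | wnot φ ih =>
      obtain ⟨⟨ha0, ha1⟩, ⟨hb0, hb1⟩⟩ := geval_mem v1 v2 h1 h2 φ
      simp only [geval, ih, gneg, gcoimp, Prod.mk.injEq]
      constructor
      · split_ifs with hA hB hB
        · norm_num
        · exact absurd (show (1:ℝ) ≤ (geval v1 v2 φ).2 by linarith) hB
        · exact absurd (show (1:ℝ) - (geval v1 v2 φ).2 = 0 by linarith) hA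
        · norm_num
      · split_ifs with hA hB hB
        · norm_num
        · exact absurd (le_antisymm (by linarith) ha0) hB
        · exact absurd (show (1:ℝ) ≤ 1 - (geval v1 v2 φ).1 by rw [hB]; norm_num) hA
        · norm_num
  | delta φ ih =>
      simp only [geval, ih, gneg, gdelta, Prod.mk.injEq]
      constructor
      · by_cases hc : (geval v1 v2 φ).2 = 0
        · simp [hc]
        · have h' : (1:ℝ) - (geval v1 v2 φ).2 ≠ 1 := fun hh => hc (by linarith)
          simp [hc, h']
      · by_cases hc : (geval v1 v2 φ).1 = 1
        · simp [hc]
        · have h' : (1:ℝ) - (geval v1 v2 φ).1 ≠ 0 := fun hh => hc (by linarith)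
          simp [hc, h']
  | and φ χ ihφ ihχ =>
      simp only [geval, ihφ, ihχ]
      rw [min_sub_sub_left, max_sub_sub_left]
  | or φ χ ihφ ihχ =>
      simp only [geval, ihφ, ihχ]
      rw [min_sub_sub_left, max_sub_sub_left]
  | imp φ χ ihφ ihχ =>
      simp only [geval, ihφ, ihχ, gimp, gcoimp, Prod.mk.injEq]
      constructor
      · split_ifs with hA hB hB
        · norm_num
        · linarith
        · linarith
        · norm_num
      · split_ifs with hA hB hB
        · norm_num
        · linarith
        · linarith
        · norm_num
  | coimp φ χ ihφ ihχ =>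
      simp only [geval, ihφ, ihχ, gimp, gcoimp, Prod.mk.injEq]
      constructor
      · split_ifs with hA hB hB
        · norm_num
        · linarith
        · linarith
        · norm_num
      · split_ifs with hA hB hB
        · norm_num
        · linarith
        · linarith
        · norm_num

lemma exists_squash (a c : ℝ) (ha0 : 0 < a) (ha1 : a < 1) (hc0 : 0 < c) (hc1 : c < 1) :
    ∃ h : ℝ → ℝ, StrictMono h ∧ h 0 = 0 ∧ h 1 = 1 ∧ h a = c := by
  have hna : (a:ℝ) ≠ 0 := ne_of_gt ha0
  have hna' : (1:ℝ) - a ≠ 0 := by linarith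
  refine ⟨fun t => if t ≤ a then (c / a) * t else c + ((1 - c) / (1 - a)) * (t - a), ?_, ?_, ?_, ?_⟩
  · intro s t hst
    have hca : 0 < c / a := div_pos hc0 ha0
    have hca' : 0 < (1 - c) / (1 - a) := div_pos (by linarith) (by linarith)
    dsimp only
    rcases le_or_gt s a with hs | hs
    · rcases le_or_gt t a with ht | ht
      · rw [if_pos hs, if_pos ht]
        exact mul_lt_mul_of_pos_left hst hca
      · rw [if_pos hs, if_neg (not_le.mpr ht)]
        have h1 : (c/a)*s ≤ c := by
          rw [div_mul_eq_mul_div, div_le_iff₀ ha0]; nlinarith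
        nlinarith [mul_pos hca' (sub_pos.mpr ht)]
    · rw [if_neg (not_le.mpr hs), if_neg (not_le.mpr (hs.trans hst))]
      have := mul_lt_mul_of_pos_left (show s - a < t - a by linarith) hca'
      linarith
  · simp [le_of_lt ha0]
  · show (if (1:ℝ) ≤ a then c / a * 1 else c + (1 - c) / (1 - a) * (1 - a)) = 1
    rw [if_neg (not_le.mpr ha1), div_mul_cancel₀ _ hna']
    ring
  · show (if a ≤ a then c / a * a else c + (1 - c) / (1 - a) * (a - a)) = c
    rw [if_pos le_rfl, div_mul_cancel₀ _ hna]

lemma valOK_conf (v : ℕ → ℝ) (h : valOK v) : valOK (fun n => 1 - v n) := fun n =>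
  ⟨show (0:ℝ) ≤ 1 - v n by linarith [(h n).2], show (1:ℝ) - v n ≤ 1 by linarith [(h n).1]⟩

lemma L1 (x : ℝ) (hx0 : 0 < x) (hx1 : x ≤ 1) (φ : GForm)
    (H : ∀ v1 v2 : ℕ → ℝ, valOK v1 → valOK v2 → x ≤ (geval v1 v2 φ).1) :
    ∀ v1 v2 : ℕ → ℝ, valOK v1 → valOK v2 → (geval v1 v2 φ).1 = 1 := by
  intro v1 v2 h1 h2
  by_contra hne
  obtain ⟨⟨ha0, ha1'⟩, _⟩ := geval_mem v1 v2 h1 h2 φ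
  have hax : x ≤ (geval v1 v2 φ).1 := H v1 v2 h1 h2
  have halt : (geval v1 v2 φ).1 < 1 := lt_of_le_of_ne ha1' hne
  obtain ⟨h, hm, h0, h1e, hac⟩ := exists_squash (geval v1 v2 φ).1 (x/2)
    (lt_of_lt_of_le hx0 hax) halt (by linarith) (by linarith)
  have hok : ∀ v : ℕ → ℝ, valOK v → valOK (fun n => h (v n)) := by
    intro v hv n
    exact ⟨h0 ▸ hm.monotone (hv n).1, h1e ▸ hm.monotone (hv n).2⟩
  have hH := H _ _ (hok v1 h1) (hok v2 h2)
  rw [geval_comp h hm h0 h1e] at hH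
  simp only [hac] at hH
  linarith

lemma Lmain (x : ℝ) (hx0 : 0 < x) (hx1 : x ≤ 1) (φ : GForm)
    (H : ∀ v1 v2 : ℕ → ℝ, valOK v1 → valOK v2 → x ≤ (geval v1 v2 φ).1) :
    ∀ v1 v2 : ℕ → ℝ, valOK v1 → valOK v2 → geval v1 v2 φ = ((1:ℝ), (0:ℝ)) := by
  have hall := L1 x hx0 hx1 φ H
  intro v1 v2 h1 h2
  have hc := hall _ _ (valOK_conf v2 h2) (valOK_conf v1 h1)
  rw [geval_conf v1 v2 h1 h2 φ] at hc
  simp only at hc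
  have hb : (geval v1 v2 φ).2 = 0 := by linarith
  exact Prod.ext (hall v1 v2 h1 h2) hb

/-- For every point-generated filter `⟨x,y⟩^↑` (with `⟨x,y⟩ ≠ ⟨0,1⟩`), a formula is
`G²`-valid iff its value lies in the filter under every valuation. -/
theorem validity_iff_values_in_point_generated_filter :
    ∀ x y : ℝ, x ∈ Set.Icc (0:ℝ) 1 → y ∈ Set.Icc (0:ℝ) 1 → (x, y) ≠ ((0:ℝ), (1:ℝ)) →
      ∀ φ : GForm,
        ((∀ v1 v2 : ℕ → ℝ, valOK v1 → valOK v2 → geval v1 v2 φ = ((1:ℝ), (0:ℝ)))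
          ↔ (∀ v1 v2 : ℕ → ℝ, valOK v1 → valOK v2 → geval v1 v2 φ ∈ upset x y)) ∧
        ((∀ v1 v2 : ℕ → ℝ, valOK v1 → valOK v2 → tle (x, y) (geval v1 v2 φ)) →
          (∀ v1 v2 : ℕ → ℝ, valOK v1 → valOK v2 → geval v1 v2 φ = ((1:ℝ), (0:ℝ)))) := by
  intro x y hx hy hne φ
  have key : (∀ v1 v2 : ℕ → ℝ, valOK v1 → valOK v2 → tle (x,y) (geval v1 v2 φ)) →
      (∀ v1 v2 : ℕ → ℝ, valOK v1 → valOK v2 → geval v1 v2 φ = ((1:ℝ), (0:ℝ))) := by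
    intro H
    rcases eq_or_lt_of_le hx.1 with hx0 | hx0
    · have hy1 : y < 1 := lt_of_le_of_ne hy.2 (fun hh => hne (by simp [← hx0, hh]))
      apply Lmain (1 - y) (by linarith) (by linarith [hy.1])
      intro v1 v2 h1 h2
      have hH := (H _ _ (valOK_conf v2 h2) (valOK_conf v1 h1)).2
      rw [geval_conf v1 v2 h1 h2 φ] at hH
      simp only at hH
      linarith
    · exact Lmain x hx0 hx.2 φ (fun v1 v2 h1 h2 => (H v1 v2 h1 h2).1)
  refine ⟨⟨fun hv v1 v2 h1 h2 => ?_, fun hv => key hv⟩, key⟩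
  rw [hv v1 v2 h1 h2]; exact ⟨hx.2, hy.1⟩
end
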